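/- The quick algorithm computes the PPE step correctly: at node c with remaining set I, let s be the child whose subtree contains the outcome of I with the current player's maximum payoff, and let M be the current player's maximum payoff over outcomes of I in the other subtrees. Then the set of outcomes surviving all Newcombian-State discardings at c equals the set of outcomes of I in the subtree of s with current-player payoff greater than M, and the next move is s. -/

import Mathlib

open Classical

section PPE

variable {O C : Type*} [Fintype O] [DecidableEq O] [DecidableEq C]

/-- Target set of a Newcombian State (a list of children of the current node),
defined recursively from the remaining-outcome set `I`, the descendant map `D`
and the current player's payoff `pay`. -/
noncomputable def target (I : Finset O) (D : C → Finset O) (pay : O → ℤ) :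
    List C → Finset O
  | [] => ∅
  | [n] => I ∩ D n
  | n :: m :: p =>
      let Tp := target I D pay (m :: p)
      (I ∩ D n).filter (fun o => ¬ (Tp.Nonempty ∧ ∀ o' ∈ Tp, pay o < pay o'))

/-- A Newcombian State at the current node: a nonempty list of children with no
two consecutive elements equal. -/
def ValidState (F : Finset C) (η : List C) : Prop :=
  η ≠ [] ∧ (∀ n ∈ η, n ∈ F) ∧ η.Chain' (· ≠ ·)

/-- `o` is discarded by some Newcombian State at the current node. -/
def Discards (I : Finset O) (D : C → Finset O) (pay : O → ℤ) (F : Finset C)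
    (o : O) : Prop :=
  ∃ n p, ValidState F (n :: p) ∧ o ∈ I ∧ o ∉ D n ∧
    (target I D pay (n :: p)).Nonempty ∧
    ∀ o' ∈ target I D pay (n :: p), pay o < pay o'

/-- The set of outcomes remaining after the discarding process at the current node. -/
noncomputable def survivors (I : Finset O) (D : C → Finset O) (pay : O → ℤ)
    (F : Finset C) : Finset O :=
  I.filter (fun o => ¬ Discards I D pay F o)

/-- Worst payoff of a Newcombian State. -/
noncomputable def wp (I : Finset O) (D : C → Finset O) (pay : O → ℤ)
    (η : List C) : ℤ :=
  sInf (pay '' (target I D pay η : Set O))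

end PPE

/-!
Fix the child `s` holding the best outcome and a child `c` holding an outcome `w` of `I` outside
`D s`. Prepending to a state headed by one of `s, c` the other strictly raises its worst payoff:
the new target consists of the outcomes of the new head with payoff at least the old worst one.
Hence if `t` is the largest worst payoff `≤ pay x` of an `s`-headed state (`x ∈ D s`), no outcome
of `c` has payoff in `[t, pay x]`, for otherwise `s, c, s, …` would climb past `t` and stay
`≤ pay x`. Taking `x` the best outcome gives `t > M`, and that state discards everything outside
`D s`; taking `x` an outcome of `s` with payoff at most `M`, the state `c, s, …` discards `x`.
Outcomes of `s` above `M` survive, since every other child's targets lie at or below `M`.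
-/

theorem ValidState.singleton {C : Type*} {F : Finset C} {n : C} (hn : n ∈ F) :
    ValidState F [n] :=
  ⟨List.cons_ne_nil _ _, by simpa using hn, List.isChain_singleton n⟩

theorem ValidState.cons {C : Type*} {F : Finset C} {n m : C} {p : List C}
    (hv : ValidState F (m :: p)) (hn : n ∈ F) (hnm : n ≠ m) : ValidState F (n :: m :: p) := by
  obtain ⟨-, hmem, hchain⟩ := hv
  refine ⟨List.cons_ne_nil _ _, ?_, List.isChain_cons_cons.2 ⟨hnm, hchain⟩⟩
  intro k hk
  rcases List.mem_cons.1 hk with rfl | hk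
  exacts [hn, hmem k hk]

section Newcomb

variable {O C : Type*} [Fintype O] [DecidableEq O]

def IsWorstPayoff (I : Finset O) (D : C → Finset O) (pay : O → ℤ) (F : Finset C) (n : C)
    (t : ℤ) : Prop :=
  ∃ p, ValidState F (n :: p) ∧ IsLeast (pay '' ↑(target I D pay (n :: p))) t

variable {I : Finset O} {D : C → Finset O} {pay : O → ℤ} {F : Finset C}

theorem target_cons_subset (n : C) (p : List C) : target I D pay (n :: p) ⊆ I ∩ D n := by
  cases p with
  | nil => simp only [target, Finset.Subset.refl]
  | cons m q => simp only [target]; exact Finset.filter_subset _ _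

theorem target_cons_cons_eq_filter (n m : C) (p : List C) {t : ℤ}
    (ht : IsLeast (pay '' ↑(target I D pay (m :: p))) t) :
    target I D pay (n :: m :: p) = (I ∩ D n).filter (t ≤ pay ·) := by
  obtain ⟨⟨u, hu, rfl⟩, hmin⟩ := ht
  simp only [target]
  refine Finset.filter_congr fun o _ => ⟨fun h => ?_, fun hle h => ?_⟩
  · by_contra! hlt
    exact h ⟨⟨u, hu⟩, fun o' ho' => hlt.trans_le (hmin ⟨o', ho', rfl⟩)⟩
  · exact (h.2 u hu).not_ge hle

theorem exists_isLeast_target {η : List C} (hne : (target I D pay η).Nonempty) :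
    ∃ t, IsLeast (pay '' ↑(target I D pay η)) t :=
  ⟨_, by rw [← Finset.coe_image]; exact Finset.isLeast_min' _ (hne.image pay)⟩

namespace IsWorstPayoff

variable {n m : C} {t t' : ℤ}

theorem exists_mem (ht : IsWorstPayoff I D pay F n t) : ∃ u ∈ I ∩ D n, pay u = t := by
  obtain ⟨p, -, ⟨u, hu, rfl⟩, -⟩ := ht
  exact ⟨u, target_cons_subset n p hu, rfl⟩

theorem ne (hdisj : ∀ c c' : C, c ≠ c' → Disjoint (D c) (D c'))
    (hpay : Function.Injective pay) (ht : IsWorstPayoff I D pay F m t)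
    (ht' : IsWorstPayoff I D pay F n t') (hnm : n ≠ m) : t ≠ t' := by
  obtain ⟨u, hu, rfl⟩ := ht.exists_mem
  obtain ⟨u', hu', rfl⟩ := ht'.exists_mem
  intro h
  exact Finset.disjoint_left.1 (hdisj m n hnm.symm) (Finset.mem_inter.1 hu).2
    (hpay h ▸ (Finset.mem_inter.1 hu').2)

theorem discards (ht : IsWorstPayoff I D pay F n t) {o : O} (ho : o ∈ I) (hon : o ∉ D n)
    (hot : pay o < t) : Discards I D pay F o := by
  obtain ⟨p, hv, ⟨u, hu, -⟩, hmin⟩ := ht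
  exact ⟨n, p, hv, ho, hon, ⟨u, hu⟩, fun o' ho' => hot.trans_le (hmin ⟨o', ho', rfl⟩)⟩

theorem step (hdisj : ∀ c c' : C, c ≠ c' → Disjoint (D c) (D c'))
    (hpay : Function.Injective pay) (ht : IsWorstPayoff I D pay F m t) (hn : n ∈ F)
    (hnm : n ≠ m) {b : O} (hb : b ∈ I ∩ D n) (htb : t ≤ pay b) :
    ∃ t', IsWorstPayoff I D pay F n t' ∧ t < t' ∧ ∀ x ∈ I ∩ D n, t ≤ pay x → t' ≤ pay x := by
  obtain ⟨p, hv, hleast⟩ := ht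
  have htarget := target_cons_cons_eq_filter n m p hleast
  obtain ⟨t', ht'⟩ := exists_isLeast_target (η := n :: m :: p)
    ⟨b, htarget ▸ Finset.mem_filter.2 ⟨hb, htb⟩⟩
  have hreach : IsWorstPayoff I D pay F n t' := ⟨m :: p, hv.cons hn hnm, ht'⟩
  obtain ⟨u', hu', rfl⟩ := ht'.1
  refine ⟨pay u', hreach, ?_, fun x hx htx => ht'.2 ⟨x, ?_, rfl⟩⟩
  · rw [Finset.mem_coe, htarget, Finset.mem_filter] at hu'
    exact hu'.2.lt_of_ne (ne hdisj hpay ⟨p, hv, hleast⟩ hreach hnm)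
  · rw [Finset.mem_coe, htarget]
    exact Finset.mem_filter.2 ⟨hx, htx⟩

theorem exists_isGreatest (hm : m ∈ F) {x : O} (hx : x ∈ I ∩ D m) :
    ∃ t, IsGreatest {t | IsWorstPayoff I D pay F m t ∧ t ≤ pay x} t := by
  have hx' : x ∈ target I D pay [m] := by simpa only [target] using hx
  obtain ⟨t₀, ht₀⟩ := exists_isLeast_target ⟨x, hx'⟩
  have hbase : IsWorstPayoff I D pay F m t₀ := ⟨[], ValidState.singleton hm, ht₀⟩
  obtain ⟨t, ht, hmax⟩ := Int.exists_greatest_of_bdd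
    (P := fun t => IsWorstPayoff I D pay F m t ∧ t ≤ pay x) ⟨pay x, fun _ h => h.2⟩
    ⟨t₀, hbase, ht₀.2 ⟨x, hx', rfl⟩⟩
  exact ⟨t, ht, hmax⟩

theorem lt_of_isGreatest (hdisj : ∀ c c' : C, c ≠ c' → Disjoint (D c) (D c'))
    (hpay : Function.Injective pay) {s c : C} (hs : s ∈ F) (hc : c ∈ F) (hcs : c ≠ s)
    {x b : O} (hx : x ∈ I ∩ D s)
    (ht : IsGreatest {t | IsWorstPayoff I D pay F s t ∧ t ≤ pay x} t)
    (hb : b ∈ I ∩ D c) (htb : t ≤ pay b) : pay x < pay b := by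
  by_contra! hbx
  obtain ⟨t₁, ht₁, htt₁, ht₁b⟩ := ht.1.1.step hdisj hpay hc hcs hb htb
  have ht₁x : t₁ ≤ pay x := (ht₁b b hb htb).trans hbx
  obtain ⟨t₂, ht₂, ht₁t₂, ht₂x⟩ := ht₁.step hdisj hpay hs hcs.symm hx ht₁x
  have : t₂ ≤ t := ht.2 ⟨ht₂, ht₂x x hx ht₁x⟩
  omega

end IsWorstPayoff

theorem discards_of_notMem (hdisj : ∀ c c' : C, c ≠ c' → Disjoint (D c) (D c'))
    (hpay : Function.Injective pay) {s c : C} (hs : s ∈ F) (hc : c ∈ F) (hcs : c ≠ s)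
    {x w o : O} (hx : x ∈ I ∩ D s) (hw : w ∈ I ∩ D c) (hwx : pay w < pay x) (ho : o ∈ I)
    (hos : o ∉ D s) (how : pay o ≤ pay w) : Discards I D pay F o := by
  obtain ⟨t, ht⟩ := IsWorstPayoff.exists_isGreatest hs hx
  have hwt : pay w < t := by
    by_contra! htw
    exact (IsWorstPayoff.lt_of_isGreatest hdisj hpay hs hc hcs hx ht hw htw).not_gt hwx
  exact ht.1.1.discards ho hos (how.trans_lt hwt)

theorem discards_of_le (hdisj : ∀ c c' : C, c ≠ c' → Disjoint (D c) (D c'))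
    (hpay : Function.Injective pay) {s c : C} (hs : s ∈ F) (hc : c ∈ F) (hcs : c ≠ s)
    {a w : O} (ha : a ∈ I ∩ D s) (hw : w ∈ I ∩ D c) (haw : pay a ≤ pay w) :
    Discards I D pay F a := by
  obtain ⟨t, ht⟩ := IsWorstPayoff.exists_isGreatest hs ha
  obtain ⟨t', ht', htt', -⟩ := ht.1.1.step hdisj hpay hc hcs hw (ht.1.2.trans haw)
  obtain ⟨b, hb, rfl⟩ := ht'.exists_mem
  exact ht'.discards (Finset.mem_inter.1 ha).1
    (Finset.disjoint_left.1 (hdisj s c hcs.symm) (Finset.mem_inter.1 ha).2)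
    (IsWorstPayoff.lt_of_isGreatest hdisj hpay hs hc hcs ha ht hb htt'.le)

theorem not_discards (hdisj : ∀ c c' : C, c ≠ c' → Disjoint (D c) (D c')) {s : C} {o : O}
    (hos : o ∈ D s) (hgt : ∀ o' ∈ I, o' ∉ D s → pay o' < pay o) : ¬ Discards I D pay F o := by
  rintro ⟨n, p, -, -, hon, ⟨v, hv⟩, hall⟩
  have hns : n ≠ s := by rintro rfl; exact hon hos
  obtain ⟨hvI, hvn⟩ := Finset.mem_inter.1 (target_cons_subset n p hv)
  exact (hgt v hvI (Finset.disjoint_left.1 (hdisj n s hns) hvn)).not_gt (hall v hv)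

end Newcomb

theorem quick_algorithm_correct_general
    {O C : Type*} [Fintype O] [DecidableEq O]
    (I : Finset O) (D : C → Finset O) (pay : O → ℤ) (F : Finset C)
    (hcov : ∀ o ∈ I, ∃ c ∈ F, o ∈ D c)
    (hdisj : ∀ c c' : C, c ≠ c' → Disjoint (D c) (D c'))
    (hpay : Function.Injective pay)
    (s : C) (hs : s ∈ F)
    (omax : O) (homax : omax ∈ I ∩ D s) (hmax : ∀ o ∈ I, pay o ≤ pay omax)
    (M : ℤ) (hM1 : ∃ o ∈ I, o ∉ D s ∧ pay o = M)
    (hM2 : ∀ o ∈ I, o ∉ D s → pay o ≤ M) :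
    survivors I D pay F = (I ∩ D s).filter (fun o => M < pay o) ∧
    survivors I D pay F ⊆ D s := by
  obtain ⟨w, hwI, hws, rfl⟩ := hM1
  obtain ⟨c, hc, hwc⟩ := hcov w hwI
  have hcs : c ≠ s := by rintro rfl; exact hws hwc
  have hw : w ∈ I ∩ D c := Finset.mem_inter.2 ⟨hwI, hwc⟩
  have hwmax : pay w < pay omax :=
    (hmax w hwI).lt_of_ne fun h => hws (hpay h ▸ (Finset.mem_inter.1 homax).2)
  have hsurv : survivors I D pay F = (I ∩ D s).filter (fun o => pay w < pay o) := by
    ext o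
    simp only [survivors, Finset.mem_filter, Finset.mem_inter]
    constructor
    · rintro ⟨hoI, hnd⟩
      by_cases hos : o ∈ D s
      · refine ⟨⟨hoI, hos⟩, not_le.1 fun how => hnd ?_⟩
        exact discards_of_le hdisj hpay hs hc hcs (Finset.mem_inter.2 ⟨hoI, hos⟩) hw how
      · exact (hnd (discards_of_notMem hdisj hpay hs hc hcs homax hw hwmax hoI hos
          (hM2 o hoI hos))).elim
    · rintro ⟨⟨hoI, hos⟩, hwo⟩
      exact ⟨hoI, not_discards hdisj hos fun o' ho' ho's => (hM2 o' ho' ho's).trans_lt hwo⟩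
  exact ⟨hsurv, hsurv ▸ fun o ho => (Finset.mem_inter.1 (Finset.mem_filter.1 ho).1).2⟩

/-- correctness of the quick algorithm: if `s` is the child whose
subtree contains the outcome of `I` with the current player's maximum payoff,
and `M` is the maximum payoff over outcomes of `I` in the other subtrees, then
the surviving set equals the outcomes of `I` in the subtree of `s` with payoff
greater than `M`, and the next move is `s`. -/
theorem quick_algorithm_correct
    {O C : Type*} [Fintype O] [DecidableEq O] [DecidableEq C]
    (I : Finset O) (D : C → Finset O) (pay : O → ℤ) (F : Finset C)
    (hI : I.Nonempty)
    (hcov : ∀ o ∈ I, ∃ c ∈ F, o ∈ D c)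
    (hdisj : ∀ c c' : C, c ≠ c' → Disjoint (D c) (D c'))
    (hpay : Function.Injective pay)
    (s : C) (hs : s ∈ F)
    (omax : O) (homax : omax ∈ I ∩ D s) (hmax : ∀ o ∈ I, pay o ≤ pay omax)
    (M : ℤ) (hM1 : ∃ o ∈ I, o ∉ D s ∧ pay o = M)
    (hM2 : ∀ o ∈ I, o ∉ D s → pay o ≤ M) :
    survivors I D pay F = (I ∩ D s).filter (fun o => M < pay o) ∧
    survivors I D pay F ⊆ D s :=
  quick_algorithm_correct_general I D pay F hcov hdisj hpay s hs omax homax hmax M hM1 hM2
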